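/- Let (Z(t)) be the birth-and-death process with rates q(z, z+1) = μ_Z (z ∨ 1) and q(z, z−1) = ν z started from z ∈ ℕ, and let (σ_n) be its sequence of birth instants (positive jumps). Then for any γ > max(μ_Z − ν, 0), the expectation E_z(Σ_{n≥1} e^{-γ σ_n}) is finite. -/

import Mathlib

open MeasureTheory ProbabilityTheory Real Filter Set

noncomputable section

namespace FileSharing

variable {Ω : Type*} [MeasurableSpace Ω] {S : Type*}

/-- The exponential distribution with rate `r`, as a measure on `ℝ`. -/
def expMeasure (r : ℝ) : Measure ℝ :=
  (volume : Measure ℝ).withDensity (exponentialPDF r)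

/-- The uniform distribution on `(0, 1]`. -/
def unifMeasure : Measure ℝ := (volume : Measure ℝ).restrict (Set.Ioc (0 : ℝ) 1)

/-- Embedded jump chain of a continuous-time Markov jump process:
`next s u` is the state after a jump from `s`, where `u ∈ (0,1]` selects the target. -/
def chainOf (next : S → ℝ → S) (x : S) (U : ℕ → Ω → ℝ) : ℕ → Ω → S
  | 0 => fun _ => x
  | n + 1 => fun ω => next (chainOf next x U n ω) (U n ω)

/-- Jump times: the `n`-th jump occurs after an exponential holding time with
rate `R s` in state `s` (holding time = standard exponential `E n` divided by the rate). -/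
def jumpT (R : S → ℝ) (next : S → ℝ → S) (x : S) (E U : ℕ → Ω → ℝ) : ℕ → Ω → ℝ
  | 0 => fun _ => 0
  | n + 1 => fun ω => jumpT R next x E U n ω + E n ω / R (chainOf next x U n ω)

/-- The continuous-time Markov jump process with jump rates `R`, jump transitions `next`,
initial state `x`, driven by i.i.d. standard exponentials `E` (holding times) and
i.i.d. uniform variables `U` (jump selection). -/
def jumpProc (R : S → ℝ) (next : S → ℝ → S) (x : S) (E U : ℕ → Ω → ℝ)
    (t : ℝ) (ω : Ω) : S :=
  chainOf next x U (Nat.card {n : ℕ | jumpT R next x E U (n + 1) ω ≤ t}) ω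

/-- `E` is an i.i.d. sequence of standard exponential random variables. -/
def IIDExp (P : Measure Ω) (E : ℕ → Ω → ℝ) : Prop :=
  (∀ n, Measurable (E n)) ∧ iIndepFun E P ∧
    ∀ n, Measure.map (E n) P = expMeasure 1

/-- `E`, `U` are jointly independent, the `E n` standard exponential and
the `U n` uniform on `(0,1]`. -/
def DrivingNoise (P : Measure Ω) (E U : ℕ → Ω → ℝ) : Prop :=
  (∀ n, Measurable (E n)) ∧ (∀ n, Measurable (U n)) ∧
    iIndepFun (Sum.elim E U) P ∧
    (∀ n, Measure.map (E n) P = expMeasure 1) ∧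
    (∀ n, Measure.map (U n) P = unifMeasure)

/-- A Yule (pure birth) process with rate `μ`, started from `w` individuals:
each individual gives birth to a new one at rate `μ`, so the total birth rate
in state `s` is `μ * s`. -/
def yule (μ : ℝ) (w : ℕ) (E : ℕ → Ω → ℝ) : ℝ → Ω → ℕ :=
  jumpProc (fun s => μ * s) (fun s _ => s + 1) w E (fun _ _ => 0)

/-- Total jump rate of the birth-and-death process with birth rate `μ (z ∨ 1)`
and death rate `ν z`. -/
def bdR (μ ν : ℝ) (z : ℕ) : ℝ := μ * max z 1 + ν * z

/-- Jump transition of the birth-and-death process with birth rate `μ (z ∨ 1)`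
and death rate `ν z`. -/
def bdNext (μ ν : ℝ) (z : ℕ) (u : ℝ) : ℕ :=
  if u * bdR μ ν z ≤ μ * max z 1 then z + 1 else z - 1

/-- Embedded chain of the birth-and-death process. -/
def bdChain (μ ν : ℝ) (z : ℕ) (U : ℕ → Ω → ℝ) : ℕ → Ω → ℕ :=
  chainOf (bdNext μ ν) z U

/-- Jump times of the birth-and-death process. -/
def bdTimes (μ ν : ℝ) (z : ℕ) (E U : ℕ → Ω → ℝ) : ℕ → Ω → ℝ :=
  jumpT (bdR μ ν) (bdNext μ ν) z E U

/-- The birth-and-death process with rates `q(z, z+1) = μ (z ∨ 1)` and `q(z, z-1) = ν z`. -/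
def bdProc (μ ν : ℝ) (z : ℕ) (E U : ℕ → Ω → ℝ) : ℝ → Ω → ℕ :=
  jumpProc (bdR μ ν) (bdNext μ ν) z E U

/-- `bdUp μ ν z U n ω` : the `(n+1)`-st jump of the birth-and-death process is a birth. -/
def bdUp (μ ν : ℝ) (z : ℕ) (U : ℕ → Ω → ℝ) (n : ℕ) (ω : Ω) : Prop :=
  bdChain μ ν z U (n + 1) ω = bdChain μ ν z U n ω + 1

/-- Counting process of the birth instants of the birth-and-death process. -/
def bdBirthCount (μ ν : ℝ) (z : ℕ) (E U : ℕ → Ω → ℝ) (t : ℝ) (ω : Ω) : ℕ :=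
  Nat.card {n : ℕ | bdTimes μ ν z E U (n + 1) ω ≤ t ∧ bdUp μ ν z U n ω}

/-- The `k`-th birth instant (`k` counted from `0`) of the birth-and-death process. -/
def bdBirthTime (μ ν : ℝ) (z : ℕ) (E U : ℕ → Ω → ℝ) (k : ℕ) (ω : Ω) : ℝ :=
  bdTimes μ ν z E U (Nat.nth (fun n => bdUp μ ν z U n ω) k + 1) ω

/-! Every birth instant is a jump instant, so it suffices to bound `E_z(Σ_n e^{-γ T_n})` over all
jump times `T_n`. Conditioning on the first jump (an exponential holding time of rate
`R = μ (z ∨ 1) + ν z`, then a birth with probability `p = μ (z ∨ 1) / R`, both independent of the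
later noise) expresses the expectation of the first `N + 1` terms from `z` as
`R / (R + γ) · (p (1 + e_N(z + 1)) + (1 - p) (1 + e_N(z - 1)))`, where `e_N(x)` is that of the first
`N` terms from `x`. For `γ > max(μ - ν, 0)` there is an affine `h ≥ 0` with
`μ (z ∨ 1) (1 + h(z + 1)) + ν z (1 + h(z - 1)) ≤ (R + γ) h(z)`, so `e_N ≤ h` by induction on `N`. -/

open scoped ENNReal

section JumpProcess

variable {S : Type*}

theorem chainOf_succ_eq_chainOf_shift {Ω : Type*} (next : S → ℝ → S) (x : S)
    (U : ℕ → Ω → ℝ) : ∀ (n : ℕ) (ω : Ω), chainOf next x U (n + 1) ω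
      = chainOf next (next x (U 0 ω)) (fun k => U (k + 1)) n ω
  | 0, _ => rfl
  | n + 1, ω => congrArg (next · (U (n + 1) ω)) (chainOf_succ_eq_chainOf_shift next x U n ω)

theorem jumpT_succ_eq_jumpT_shift {Ω : Type*} (R : S → ℝ) (next : S → ℝ → S) (x : S)
    (E U : ℕ → Ω → ℝ) : ∀ (n : ℕ) (ω : Ω), jumpT R next x E U (n + 1) ω
      = E 0 ω / R x
        + jumpT R next (next x (U 0 ω)) (fun k => E (k + 1)) (fun k => U (k + 1)) n ω
  | 0, ω => by simp [jumpT, chainOf]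
  | n + 1, ω => by
      change jumpT R next x E U (n + 1) ω + E (n + 1) ω / R (chainOf next x U (n + 1) ω) = _
      rw [jumpT_succ_eq_jumpT_shift R next x E U n ω,
        chainOf_succ_eq_chainOf_shift next x U n ω, add_assoc]
      rfl

variable [MeasurableSpace S] [Countable S] [MeasurableSingletonClass S]

theorem measurable_chainOf {next : S → ℝ → S} (hnext : ∀ s, Measurable (next s)) (x : S)
    {U : ℕ → Ω → ℝ} (hU : ∀ n, Measurable (U n)) : ∀ n, Measurable (chainOf next x U n)
  | 0 => measurable_const
  | n + 1 =>
    (measurable_from_prod_countable_right (f := fun p : S × ℝ => next p.1 p.2) hnext).comp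
      ((measurable_chainOf hnext x hU n).prodMk (hU n))

theorem measurable_jumpT (R : S → ℝ) {next : S → ℝ → S} (hnext : ∀ s, Measurable (next s))
    (x : S) {E U : ℕ → Ω → ℝ} (hE : ∀ n, Measurable (E n)) (hU : ∀ n, Measurable (U n)) :
    ∀ n, Measurable (jumpT R next x E U n)
  | 0 => measurable_const
  | n + 1 => (measurable_jumpT R hnext x hE hU n).add
      ((hE n).div ((measurable_of_countable R).comp (measurable_chainOf hnext x hU n)))

end JumpProcess

theorem measurable_bdNext (μ ν : ℝ) (z : ℕ) : Measurable (bdNext μ ν z) :=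
  Measurable.ite (measurableSet_le (measurable_id.mul_const _) measurable_const)
    measurable_const measurable_const

section DrivingNoise

/-- `Sum.inl n` indexes `E n` and `Sum.inr n` indexes `U n`. -/
abbrev noiseSigma {Ω : Type*} (E U : ℕ → Ω → ℝ) (s : Set (ℕ ⊕ ℕ)) : MeasurableSpace Ω :=
  ⨆ i ∈ s, MeasurableSpace.comap (Sum.elim E U i) inferInstance

def firstNoise : Set (ℕ ⊕ ℕ) := {Sum.inl 0, Sum.inr 0}

theorem measurable_noiseSigma_elim {Ω : Type*} {E U : ℕ → Ω → ℝ} {s : Set (ℕ ⊕ ℕ)}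
    {i : ℕ ⊕ ℕ} (hi : i ∈ s) : Measurable[noiseSigma E U s] (Sum.elim E U i) :=
  Measurable.of_comap_le (le_biSup (fun i => MeasurableSpace.comap (Sum.elim E U i) _) hi)

variable {P : Measure Ω} {E U : ℕ → Ω → ℝ}

theorem DrivingNoise.measurable_elim (hEU : DrivingNoise P E U) :
    ∀ i, Measurable (Sum.elim E U i)
  | .inl n => hEU.1 n
  | .inr n => hEU.2.1 n

theorem DrivingNoise.noiseSigma_le (hEU : DrivingNoise P E U) (s : Set (ℕ ⊕ ℕ)) :
    noiseSigma E U s ≤ ‹MeasurableSpace Ω› :=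
  iSup₂_le fun i _ => (hEU.measurable_elim i).comap_le

theorem DrivingNoise.indep_noiseSigma_compl (hEU : DrivingNoise P E U) (s : Set (ℕ ⊕ ℕ)) :
    Indep (noiseSigma E U s) (noiseSigma E U sᶜ) P :=
  indep_biSup_compl (fun i => (hEU.measurable_elim i).comap_le)
    ((iIndepFun_iff_iIndep _ _ _).1 hEU.2.2.1) s

theorem DrivingNoise.isProbabilityMeasure (hEU : DrivingNoise P E U) : IsProbabilityMeasure P :=
  hEU.2.2.1.isProbabilityMeasure

theorem DrivingNoise.shift (hEU : DrivingNoise P E U) :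
    DrivingNoise P (fun k => E (k + 1)) (fun k => U (k + 1)) := by
  obtain ⟨hE, hU, hind, hlawE, hlawU⟩ := hEU
  refine ⟨fun n => hE (n + 1), fun n => hU (n + 1), ?_, fun n => hlawE (n + 1),
    fun n => hlawU (n + 1)⟩
  have hsucc : (Sum.map Nat.succ Nat.succ).Injective :=
    Sum.map_injective.2 ⟨Nat.succ_injective, Nat.succ_injective⟩
  convert hind.precomp hsucc using 1
  funext i
  cases i <;> rfl

theorem DrivingNoise.lintegral_first_mul_rest (hEU : DrivingNoise P E U) {f g : ℝ → ℝ≥0∞}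
    (hf : Measurable f) (hg : Measurable g) {F : Ω → ℝ≥0∞}
    (hF : Measurable[noiseSigma E U firstNoiseᶜ] F) :
    ∫⁻ ω, f (E 0 ω) * g (U 0 ω) * F ω ∂P
      = (∫⁻ x, f x ∂expMeasure 1) * (∫⁻ u, g u ∂unifMeasure) * ∫⁻ ω, F ω ∂P := by
  have ⟨hE, hU, hind, hlawE, hlawU⟩ := hEU
  have hE0 : Measurable[noiseSigma E U firstNoise] (E 0) :=
    measurable_noiseSigma_elim (i := .inl 0) (by simp [firstNoise])
  have hU0 : Measurable[noiseSigma E U firstNoise] (U 0) :=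
    measurable_noiseSigma_elim (i := .inr 0) (by simp [firstNoise])
  have hindep : IndepFun (E 0) (U 0) P :=
    hind.indepFun (i := .inl 0) (j := .inr 0) Sum.inl_ne_inr
  have hsplit : ∫⁻ ω, f (E 0 ω) * g (U 0 ω) ∂P = (∫⁻ ω, f (E 0 ω) ∂P) * ∫⁻ ω, g (U 0 ω) ∂P :=
    lintegral_mul_eq_lintegral_mul_lintegral_of_indepFun'' (hf.comp (hE 0)).aemeasurable
      (hg.comp (hU 0)).aemeasurable (hindep.comp hf hg)
  rw [lintegral_mul_eq_lintegral_mul_lintegral_of_independent_measurableSpace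
      (f := fun ω => f (E 0 ω) * g (U 0 ω)) (hEU.noiseSigma_le _) (hEU.noiseSigma_le _)
      (hEU.indep_noiseSigma_compl firstNoise) ((hf.comp hE0).mul (hg.comp hU0)) hF, hsplit,
    ← hlawE 0, ← hlawU 0, lintegral_map hf (hE 0), lintegral_map hg (hU 0)]

end DrivingNoise

section Laws

theorem lintegral_exp_neg_mul_expMeasure {r s : ℝ} (hr : 0 ≤ r) (hrs : 0 < r + s) :
    ∫⁻ x, ENNReal.ofReal (Real.exp (-s * x)) ∂expMeasure r = ENNReal.ofReal (r / (r + s)) := by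
  have hdens : ∀ x, exponentialPDF r x * ENNReal.ofReal (Real.exp (-s * x))
      = ENNReal.ofReal (r / (r + s)) * exponentialPDF (r + s) x := by
    intro x
    rcases lt_or_ge x 0 with hx | hx
    · simp [exponentialPDF_of_neg hx]
    · rw [exponentialPDF_of_nonneg hx, exponentialPDF_of_nonneg hx,
        ← ENNReal.ofReal_mul (by positivity), ← ENNReal.ofReal_mul (by positivity),
        mul_assoc, ← Real.exp_add, ← mul_assoc, div_mul_cancel₀ _ hrs.ne']
      ring_nf
  rw [expMeasure, lintegral_withDensity_eq_lintegral_mul _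
      (f := exponentialPDF r) (measurable_exponentialPDFReal r).ennreal_ofReal (by fun_prop)]
  simp only [Pi.mul_apply, hdens]
  rw [lintegral_const_mul (f := exponentialPDF (r + s)) _
      (measurable_exponentialPDFReal _).ennreal_ofReal,
    lintegral_exponentialPDF_eq_one hrs, mul_one]

theorem unifMeasure_Iic {p : ℝ} (hp : p ≤ 1) : unifMeasure (Iic p) = ENNReal.ofReal p := by
  rw [unifMeasure, Measure.restrict_apply measurableSet_Iic, Iic_inter_Ioc_of_le hp,
    Real.volume_Ioc, sub_zero]

theorem unifMeasure_Ioi {p : ℝ} (hp : 0 ≤ p) : unifMeasure (Ioi p) = ENNReal.ofReal (1 - p) := by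
  rw [unifMeasure, Measure.restrict_apply measurableSet_Ioi, inter_comm, Ioc_inter_Ioi,
    sup_eq_right.2 hp, Real.volume_Ioc]

end Laws

section BirthDeath

variable {μ ν γ : ℝ}

theorem bdR_pos (hμ : 0 < μ) (hν : 0 ≤ ν) (z : ℕ) : 0 < bdR μ ν z := by
  have h1 : (1 : ℝ) ≤ (max z 1 : ℕ) := by exact_mod_cast le_max_right z 1
  unfold bdR
  nlinarith [mul_nonneg hν (Nat.cast_nonneg (α := ℝ) z)]

def bdBirthProb (μ ν : ℝ) (z : ℕ) : ℝ := μ * (max z 1 : ℕ) / bdR μ ν z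

theorem bdBirthProb_nonneg (hμ : 0 < μ) (hν : 0 ≤ ν) (z : ℕ) : 0 ≤ bdBirthProb μ ν z :=
  div_nonneg (by positivity) (bdR_pos hμ hν z).le

theorem bdBirthProb_le_one (hμ : 0 < μ) (hν : 0 ≤ ν) (z : ℕ) : bdBirthProb μ ν z ≤ 1 := by
  rw [bdBirthProb, div_le_one (bdR_pos hμ hν z), bdR]
  exact le_add_of_nonneg_right (by positivity)

theorem one_sub_bdBirthProb (hμ : 0 < μ) (hν : 0 ≤ ν) (z : ℕ) :
    1 - bdBirthProb μ ν z = ν * z / bdR μ ν z := by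
  rw [bdBirthProb, eq_div_iff (bdR_pos hμ hν z).ne', sub_mul, one_mul,
    div_mul_cancel₀ _ (bdR_pos hμ hν z).ne', bdR, add_sub_cancel_left]

theorem comp_bdNext_eq_indicator (hμ : 0 < μ) (hν : 0 ≤ ν) (z : ℕ) {M : Type*}
    [NonAssocSemiring M] (φ : ℕ → M) (u : ℝ) :
    φ (bdNext μ ν z u) = (Iic (bdBirthProb μ ν z)).indicator 1 u * φ (z + 1)
      + (Ioi (bdBirthProb μ ν z)).indicator 1 u * φ (z - 1) := by
  have hbirth : u * bdR μ ν z ≤ μ * (max z 1 : ℕ) ↔ u ≤ bdBirthProb μ ν z :=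
    (le_div_iff₀ (bdR_pos hμ hν z)).symm
  by_cases hu : u ≤ bdBirthProb μ ν z
  · rw [bdNext, if_pos (hbirth.2 hu)]
    simp [hu]
  · rw [bdNext, if_neg (mt hbirth.1 hu)]
    simp [hu, lt_of_not_ge hu]

/-- `A` is chosen so that the drift `(μ - ν) A x` of `A x` plus the jump rate `(μ + ν) x` equals
the discount `γ A x`, and `B` so that `γ B = μ (1 + A)` pays for the births at `0`. -/
def bdLyapunov (μ ν γ x : ℝ) : ℝ :=
  (μ + ν) / (γ - (μ - ν)) * x + μ * (1 + (μ + ν) / (γ - (μ - ν))) / γ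

theorem bdLyapunov_nonneg (hμ : 0 ≤ μ) (hν : 0 ≤ ν) (hγ : max (μ - ν) 0 < γ) {x : ℝ}
    (hx : 0 ≤ x) : 0 ≤ bdLyapunov μ ν γ x := by
  have : 0 < γ - (μ - ν) := sub_pos.2 ((le_max_left _ _).trans_lt hγ)
  have : 0 < γ := (le_max_right _ _).trans_lt hγ
  unfold bdLyapunov
  positivity

theorem bdLyapunov_drift (hμ : 0 ≤ μ) (hν : 0 ≤ ν) (hγ : max (μ - ν) 0 < γ) (z : ℕ) :
    μ * (max z 1 : ℕ) * (1 + bdLyapunov μ ν γ (z + 1 : ℕ))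
        + ν * z * (1 + bdLyapunov μ ν γ (z - 1 : ℕ))
      ≤ bdLyapunov μ ν γ z * (bdR μ ν z + γ) := by
  have hc : 0 < γ - (μ - ν) := sub_pos.2 ((le_max_left _ _).trans_lt hγ)
  have hγ0 : 0 < γ := (le_max_right _ _).trans_lt hγ
  set A := (μ + ν) / (γ - (μ - ν)) with hA_def
  set B := μ * (1 + A) / γ with hB_def
  have hA : A * (γ - (μ - ν)) = μ + ν := div_mul_cancel₀ _ hc.ne'
  have hB : B * γ = μ * (1 + A) := div_mul_cancel₀ _ hγ0.ne'
  have hB0 : 0 ≤ B := by positivity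
  simp only [bdLyapunov, bdR, ← hA_def, ← hB_def]
  rcases z with _ | k
  · norm_num
    nlinarith
  · have hk : max (k + 1) 1 = k + 1 := max_eq_left (Nat.le_add_left 1 k)
    simp only [hk, Nat.add_sub_cancel]
    push_cast
    nlinarith

end BirthDeath

section DiscountedJumps

variable {S : Type*}

def discountedJumps {Ω : Type*} (R : S → ℝ) (next : S → ℝ → S) (γ : ℝ) (N : ℕ) (x : S)
    (E U : ℕ → Ω → ℝ) (ω : Ω) : ℝ≥0∞ :=
  ∑ n ∈ Finset.range N, ENNReal.ofReal (Real.exp (-γ * jumpT R next x E U (n + 1) ω))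

theorem discountedJumps_succ {Ω : Type*} (R : S → ℝ) (next : S → ℝ → S) (γ : ℝ) (N : ℕ)
    (x : S) (E U : ℕ → Ω → ℝ) (ω : Ω) :
    discountedJumps R next γ (N + 1) x E U ω
      = ENNReal.ofReal (Real.exp (-(γ / R x) * E 0 ω)) * (1 + discountedJumps R next γ N
          (next x (U 0 ω)) (fun k => E (k + 1)) (fun k => U (k + 1)) ω) := by
  have hterm : ∀ n, ENNReal.ofReal (Real.exp (-γ * jumpT R next x E U (n + 1) ω))
      = ENNReal.ofReal (Real.exp (-(γ / R x) * E 0 ω)) * ENNReal.ofReal (Real.exp (-γ *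
          jumpT R next (next x (U 0 ω)) (fun k => E (k + 1)) (fun k => U (k + 1)) n ω)) := by
    intro n
    rw [jumpT_succ_eq_jumpT_shift, ← ENNReal.ofReal_mul (Real.exp_nonneg _), ← Real.exp_add]
    ring_nf
  simp only [discountedJumps, Finset.sum_range_succ', hterm, ← Finset.mul_sum]
  simp [jumpT, mul_add, add_comm]

theorem measurable_discountedJumps {Ω : Type*} [m : MeasurableSpace Ω] [MeasurableSpace S]
    [Countable S] [MeasurableSingletonClass S] (R : S → ℝ) {next : S → ℝ → S}
    (hnext : ∀ s, Measurable (next s)) (γ : ℝ) (N : ℕ) (x : S) {E U : ℕ → Ω → ℝ}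
    (hE : ∀ n, Measurable (E n)) (hU : ∀ n, Measurable (U n)) :
    Measurable (discountedJumps R next γ N x E U) :=
  Finset.measurable_sum _ fun n _ =>
    ((measurable_jumpT R hnext x hE hU (n + 1)).const_mul (-γ)).exp.ennreal_ofReal

theorem measurable_discountedJumps_shift {Ω : Type*} [MeasurableSpace S] [Countable S]
    [MeasurableSingletonClass S] (R : S → ℝ) {next : S → ℝ → S}
    (hnext : ∀ s, Measurable (next s)) (γ : ℝ) (N : ℕ) (x : S) (E U : ℕ → Ω → ℝ) :
    Measurable[noiseSigma E U firstNoiseᶜ]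
      (discountedJumps R next γ N x (fun k => E (k + 1)) (fun k => U (k + 1))) :=
  measurable_discountedJumps (m := noiseSigma E U firstNoiseᶜ) R hnext γ N x
    (fun n => measurable_noiseSigma_elim (i := .inl (n + 1)) (by simp [firstNoise]))
    (fun n => measurable_noiseSigma_elim (i := .inr (n + 1)) (by simp [firstNoise]))

end DiscountedJumps

section Expectation

variable {μ ν γ : ℝ} {P : Measure Ω}

theorem bdLyapunov_first_step (hμ : 0 < μ) (hν : 0 ≤ ν) (hγ : max (μ - ν) 0 < γ) (z : ℕ) :
    bdR μ ν z / (bdR μ ν z + γ)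
        * (bdBirthProb μ ν z * (1 + bdLyapunov μ ν γ (z + 1 : ℕ))
          + (1 - bdBirthProb μ ν z) * (1 + bdLyapunov μ ν γ (z - 1 : ℕ)))
      ≤ bdLyapunov μ ν γ z := by
  have hR := bdR_pos hμ hν z
  have hγ0 : 0 < γ := (le_max_right _ _).trans_lt hγ
  rw [one_sub_bdBirthProb hμ hν, bdBirthProb, div_mul_eq_mul_div, div_le_iff₀ (by positivity)]
  have hdrift := bdLyapunov_drift hμ.le hν hγ z
  field_simp
  linarith

theorem lintegral_bd_discountedJumps_succ (hμ : 0 < μ) (hν : 0 ≤ ν) (hγ : 0 ≤ γ)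
    {E U : ℕ → Ω → ℝ} (hEU : DrivingNoise P E U) (N z : ℕ) :
    ∫⁻ ω, discountedJumps (bdR μ ν) (bdNext μ ν) γ (N + 1) z E U ω ∂P
      = ENNReal.ofReal (bdR μ ν z / (bdR μ ν z + γ))
        * (ENNReal.ofReal (bdBirthProb μ ν z) * (1 + ∫⁻ ω, discountedJumps (bdR μ ν)
              (bdNext μ ν) γ N (z + 1) (fun k => E (k + 1)) (fun k => U (k + 1)) ω ∂P)
          + ENNReal.ofReal (1 - bdBirthProb μ ν z) * (1 + ∫⁻ ω, discountedJumps (bdR μ ν)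
              (bdNext μ ν) γ N (z - 1) (fun k => E (k + 1)) (fun k => U (k + 1)) ω ∂P)) := by
  have := hEU.isProbabilityMeasure
  have hR := bdR_pos hμ hν z
  set p := bdBirthProb μ ν z
  set G : ℕ → Ω → ℝ≥0∞ := fun x ω => 1 + discountedJumps (bdR μ ν) (bdNext μ ν) γ N x
    (fun k => E (k + 1)) (fun k => U (k + 1)) ω
  set f : ℝ → ℝ≥0∞ := fun e => ENNReal.ofReal (Real.exp (-(γ / bdR μ ν z) * e))
  have hf : Measurable f := by fun_prop
  have hG : ∀ x, Measurable[noiseSigma E U firstNoiseᶜ] (G x) := fun x =>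
    measurable_const.add (measurable_discountedJumps_shift _ (measurable_bdNext μ ν) γ N x E U)
  have hbirth : Measurable ((Iic p).indicator (1 : ℝ → ℝ≥0∞)) :=
    measurable_one.indicator measurableSet_Iic
  have hdeath : Measurable ((Ioi p).indicator (1 : ℝ → ℝ≥0∞)) :=
    measurable_one.indicator measurableSet_Ioi
  have hpoint : ∀ ω, discountedJumps (bdR μ ν) (bdNext μ ν) γ (N + 1) z E U ω
      = f (E 0 ω) * (Iic p).indicator 1 (U 0 ω) * G (z + 1) ω
        + f (E 0 ω) * (Ioi p).indicator 1 (U 0 ω) * G (z - 1) ω := by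
    intro ω
    calc _ = f (E 0 ω) * G (bdNext μ ν z (U 0 ω)) ω := discountedJumps_succ ..
      _ = _ := by rw [comp_bdNext_eq_indicator hμ hν z (G · ω)]; ring
  have hlaw : ∫⁻ x, f x ∂expMeasure 1 = ENNReal.ofReal (bdR μ ν z / (bdR μ ν z + γ)) := by
    rw [lintegral_exp_neg_mul_expMeasure zero_le_one (by positivity)]
    congr 1
    field_simp
  have hG_int : ∀ x, ∫⁻ ω, G x ω ∂P = 1 + ∫⁻ ω, discountedJumps (bdR μ ν) (bdNext μ ν) γ N x
      (fun k => E (k + 1)) (fun k => U (k + 1)) ω ∂P := fun x => by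
    rw [lintegral_add_left measurable_const, lintegral_const, measure_univ, mul_one]
  rw [lintegral_congr hpoint, lintegral_add_left
      (f := fun ω => f (E 0 ω) * (Iic p).indicator 1 (U 0 ω) * G (z + 1) ω)
      (((hf.comp (hEU.1 0)).mul (hbirth.comp (hEU.2.1 0))).mul
        ((hG _).mono (hEU.noiseSigma_le _) le_rfl)),
    hEU.lintegral_first_mul_rest hf hbirth (hG _), hEU.lintegral_first_mul_rest hf hdeath (hG _),
    lintegral_indicator_one measurableSet_Iic, lintegral_indicator_one measurableSet_Ioi,
    unifMeasure_Iic (bdBirthProb_le_one hμ hν z), unifMeasure_Ioi (bdBirthProb_nonneg hμ hν z),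
    hlaw, hG_int, hG_int]
  ring

theorem lintegral_bd_discountedJumps_le (hμ : 0 < μ) (hν : 0 ≤ ν) (hγ : max (μ - ν) 0 < γ)
    (N : ℕ) : ∀ (z : ℕ) {E U : ℕ → Ω → ℝ}, DrivingNoise P E U →
      ∫⁻ ω, discountedJumps (bdR μ ν) (bdNext μ ν) γ N z E U ω ∂P
        ≤ ENNReal.ofReal (bdLyapunov μ ν γ z) := by
  have hγ0 : 0 ≤ γ := (le_max_right _ _).trans hγ.le
  have hh : ∀ x : ℕ, 0 ≤ bdLyapunov μ ν γ x := fun x =>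
    bdLyapunov_nonneg hμ.le hν hγ (Nat.cast_nonneg x)
  induction N with
  | zero => simp [discountedJumps]
  | succ N ih =>
    intro z E U hEU
    have hR := bdR_pos hμ hν z
    have hp := bdBirthProb_nonneg hμ hν z
    have hq := sub_nonneg.2 (bdBirthProb_le_one hμ hν z)
    rw [lintegral_bd_discountedJumps_succ hμ hν hγ0 hEU]
    calc _ ≤ ENNReal.ofReal (bdR μ ν z / (bdR μ ν z + γ))
          * (ENNReal.ofReal (bdBirthProb μ ν z) * ENNReal.ofReal (1 + bdLyapunov μ ν γ (z + 1 : ℕ))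
            + ENNReal.ofReal (1 - bdBirthProb μ ν z)
              * ENNReal.ofReal (1 + bdLyapunov μ ν γ (z - 1 : ℕ))) := by
          rw [ENNReal.ofReal_add zero_le_one (hh _), ENNReal.ofReal_add zero_le_one (hh _),
            ENNReal.ofReal_one]
          gcongr <;> exact ih _ hEU.shift
      _ = ENNReal.ofReal (bdR μ ν z / (bdR μ ν z + γ)
          * (bdBirthProb μ ν z * (1 + bdLyapunov μ ν γ (z + 1 : ℕ))
            + (1 - bdBirthProb μ ν z) * (1 + bdLyapunov μ ν γ (z - 1 : ℕ)))) := by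
          rw [ENNReal.ofReal_mul (div_nonneg hR.le (by linarith)),
            ENNReal.ofReal_add (mul_nonneg hp (by linarith [hh (z + 1)]))
              (mul_nonneg hq (by linarith [hh (z - 1)])),
            ENNReal.ofReal_mul hp, ENNReal.ofReal_mul hq]
      _ ≤ ENNReal.ofReal (bdLyapunov μ ν γ z) :=
          ENNReal.ofReal_le_ofReal (bdLyapunov_first_step hμ hν hγ z)

theorem lintegral_tsum_exp_bdTimes_le (hμ : 0 < μ) (hν : 0 ≤ ν) (hγ : max (μ - ν) 0 < γ)
    (z : ℕ) {E U : ℕ → Ω → ℝ} (hEU : DrivingNoise P E U) :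
    ∫⁻ ω, ∑' n, ENNReal.ofReal (Real.exp (-γ * bdTimes μ ν z E U (n + 1) ω)) ∂P
      ≤ ENNReal.ofReal (bdLyapunov μ ν γ z) := by
  have hmeas : ∀ n, Measurable fun ω =>
      ENNReal.ofReal (Real.exp (-γ * bdTimes μ ν z E U (n + 1) ω)) := fun n =>
    ((measurable_jumpT _ (measurable_bdNext μ ν) z hEU.1 hEU.2.1 (n + 1)).const_mul
      (-γ)).exp.ennreal_ofReal
  rw [lintegral_tsum fun n => (hmeas n).aemeasurable, ENNReal.tsum_eq_iSup_nat]
  refine iSup_le fun N => ?_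
  rw [← lintegral_finsetSum _ fun n _ => hmeas n]
  exact lintegral_bd_discountedJumps_le hμ hν hγ N z hEU

end Expectation

open Classical in
theorem expected_birth_series_finite_general {Ω : Type*} [MeasurableSpace Ω] (P : Measure Ω)
    (μZ ν : ℝ) (hμ : 0 < μZ) (hν : 0 < ν) (z : ℕ)
    (E U : ℕ → Ω → ℝ) (hEU : DrivingNoise P E U)
    (γ : ℝ) (hγ : max (μZ - ν) 0 < γ) :
    (∫⁻ ω, ∑' n : ℕ,
        if bdUp μZ ν z U n ω then
          ENNReal.ofReal (Real.exp (-γ * bdTimes μZ ν z E U (n + 1) ω)) else 0 ∂P) < ⊤ := by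
  calc _ ≤ ∫⁻ ω, ∑' n, ENNReal.ofReal (Real.exp (-γ * bdTimes μZ ν z E U (n + 1) ω)) ∂P :=
        lintegral_mono fun ω => ENNReal.tsum_le_tsum fun n => by split_ifs <;> simp
    _ ≤ ENNReal.ofReal (bdLyapunov μZ ν γ z) :=
        lintegral_tsum_exp_bdTimes_le hμ hν.le hγ z hEU
    _ < ⊤ := ENNReal.ofReal_lt_top

open Classical in
/-- Corollary 2 (series of birth instants): for the birth-and-death process with rates
`q(z,z+1) = μ_Z (z ∨ 1)`, `q(z,z−1) = ν z` started from `z`, with `(σ_n)` its sequence of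
birth instants, `E_z(Σ_n e^{-γ σ_n}) < ∞` for any `γ > max(μ_Z − ν, 0)`. -/
theorem expected_birth_series_finite {Ω : Type*} [MeasurableSpace Ω] (P : Measure Ω)
    [IsProbabilityMeasure P] (μZ ν : ℝ) (hμ : 0 < μZ) (hν : 0 < ν) (z : ℕ)
    (E U : ℕ → Ω → ℝ) (hEU : DrivingNoise P E U)
    (γ : ℝ) (hγ : max (μZ - ν) 0 < γ) :
    (∫⁻ ω, ∑' n : ℕ,
        if bdUp μZ ν z U n ω then
          ENNReal.ofReal (Real.exp (-γ * bdTimes μZ ν z E U (n + 1) ω)) else 0 ∂P) < ⊤ :=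
  expected_birth_series_finite_general P μZ ν hμ hν z E U hEU γ hγ

end FileSharing
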